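/- arXiv:0802.2597 — 8 statements merged into one kernel-verified Lean document; each statement's English description precedes it below -/
import Mathlib

section
/- Let V be a real normed vector space, let I ⊆ ℝ be an open interval, let Q, N : I → (V →L[ℝ] V →L[ℝ] ℝ) be differentiable curves of continuous symmetric bilinear forms on V, let ψ : I → V be differentiable, and let E : I → ℝ be differentiable. Suppose that for every t ∈ I and every v ∈ V one has Q(t)(ψ(t), v) = E(t) · N(t)(ψ(t), v). Then for every t ∈ I, E'(t) · N(t)(ψ(t), ψ(t)) = Q'(t)(ψ(t), ψ(t)) − E(t) · N'(t)(ψ(t), ψ(t)), where Q'(t) and N'(t) denote the derivatives of the bilinear-form-valued curves at t. -/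
/-- Variational formula `Ė·N(ψ,ψ) = Q̇(ψ,ψ) − E·Ṅ(ψ,ψ)` for an eigenbranch of a
differentiable family of continuous symmetric bilinear forms. -/
theorem variational_formula
    {V : Type*} [NormedAddCommGroup V] [NormedSpace ℝ V]
    (a b : ℝ)
    (Q N Q' N' : ℝ → (V →L[ℝ] V →L[ℝ] ℝ))
    (ψ ψ' : ℝ → V) (E E' : ℝ → ℝ)
    (hQ : ∀ t ∈ Set.Ioo a b, HasDerivAt Q (Q' t) t)
    (hN : ∀ t ∈ Set.Ioo a b, HasDerivAt N (N' t) t)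
    (hψ : ∀ t ∈ Set.Ioo a b, HasDerivAt ψ (ψ' t) t)
    (hE : ∀ t ∈ Set.Ioo a b, HasDerivAt E (E' t) t)
    (hQsymm : ∀ t ∈ Set.Ioo a b, ∀ u v : V, Q t u v = Q t v u)
    (hNsymm : ∀ t ∈ Set.Ioo a b, ∀ u v : V, N t u v = N t v u)
    (heig : ∀ t ∈ Set.Ioo a b, ∀ v : V, Q t (ψ t) v = E t * N t (ψ t) v) :
    ∀ t ∈ Set.Ioo a b,
      E' t * N t (ψ t) (ψ t)
        = Q' t (ψ t) (ψ t) - E t * N' t (ψ t) (ψ t) := by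
  intro t ht
  have h1 : HasDerivAt (fun s => Q s (ψ s) (ψ s))
      ((Q' t (ψ t) + Q t (ψ' t)) (ψ t) + Q t (ψ t) (ψ' t)) t :=
    ((hQ t ht).clm_apply (hψ t ht)).clm_apply (hψ t ht)
  have h2 : HasDerivAt (fun s => N s (ψ s) (ψ s))
      ((N' t (ψ t) + N t (ψ' t)) (ψ t) + N t (ψ t) (ψ' t)) t :=
    ((hN t ht).clm_apply (hψ t ht)).clm_apply (hψ t ht)
  have h3 := (hE t ht).mul h2
  have h4 := h1.sub h3
  have hzero : (fun s => Q s (ψ s) (ψ s) - E s * N s (ψ s) (ψ s)) =ᶠ[nhds t] fun _ => (0:ℝ) := by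
    filter_upwards [isOpen_Ioo.mem_nhds ht] with s hs
    rw [heig s hs (ψ s)]; ring
  have h5 : HasDerivAt (fun _ : ℝ => (0:ℝ))
      ((Q' t (ψ t) + Q t (ψ' t)) (ψ t) + Q t (ψ t) (ψ' t)
        - (E' t * (N t (ψ t) (ψ t))
          + E t * ((N' t (ψ t) + N t (ψ' t)) (ψ t) + N t (ψ t) (ψ' t)))) t :=
    h4.congr_of_eventuallyEq hzero.symm
  have h6 := h5.unique (hasDerivAt_const t 0)
  simp only [ContinuousLinearMap.add_apply] at h6
  have e1 : Q t (ψ' t) (ψ t) = E t * N t (ψ t) (ψ' t) := by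
    rw [hQsymm t ht, heig t ht (ψ' t)]
  have e2 : Q t (ψ t) (ψ' t) = E t * N t (ψ t) (ψ' t) := heig t ht (ψ' t)
  have e3 : N t (ψ' t) (ψ t) = N t (ψ t) (ψ' t) := hNsymm t ht _ _
  rw [e1, e2, e3] at h6
  linarith
end

section
/- Let t₀ > 0, let ρ : (0, t₀] → ℝ be continuous, positive, and integrable on (0, t₀] (i.e. the improper integral ∫₀^{t₀} ρ(s) ds is finite), and let E : (0, t₀] → ℝ be differentiable with E(t) ≥ 0 and E'(t) ≥ −ρ(t) · E(t) for all t ∈ (0, t₀]. Then E(t) converges to a finite limit as t → 0⁺. -/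
/-!
The integrating factor `exp (∫₀ᵗ ρ)` turns `E' ≥ -ρ E` into `(E · exp (∫₀ᵗ ρ))' ≥ 0`, so
`G t := E t · exp (∫₀ᵗ ρ)` is monotone and nonnegative on `(0, t₀)`, hence converges as `t → 0⁺`.
Since `ρ` is integrable, `∫₀ᵗ ρ → 0`, and `E = G · exp (-∫₀ᵗ ρ)` converges as well.
-/

open MeasureTheory Set Filter Topology Real

theorem hasDerivAt_intervalIntegral_of_continuousOn_Ioc {f : ℝ → ℝ} {a b t : ℝ}
    (hf : IntegrableOn f (Ioc a b)) (hcont : ContinuousOn f (Ioc a b)) (ht : t ∈ Ioo a b) :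
    HasDerivAt (fun x => ∫ s in a..x, f s) (f t) t := by
  have hcont' : ContinuousOn f (Ioo a b) := hcont.mono Ioo_subset_Ioc_self
  refine intervalIntegral.integral_hasDerivAt_right ?_
    (hcont'.stronglyMeasurableAtFilter isOpen_Ioo t ht) (hcont'.continuousAt (isOpen_Ioo.mem_nhds ht))
  rw [intervalIntegrable_iff_integrableOn_Ioc_of_le ht.1.le]
  exact hf.mono_set (Ioc_subset_Ioc_right ht.2.le)

theorem tendsto_intervalIntegral_nhdsGT {f : ℝ → ℝ} {a b : ℝ} (hab : a < b)
    (hf : IntegrableOn f (Ioc a b)) :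
    Tendsto (fun x => ∫ s in a..x, f s) (𝓝[>] a) (𝓝 0) := by
  have hf' : IntegrableOn f (uIcc a b) := by
    rwa [uIcc_of_le hab.le, integrableOn_Icc_iff_integrableOn_Ioc]
  have hcont := intervalIntegral.continuousOn_primitive_interval hf' a left_mem_uIcc
  rw [uIcc_of_le hab.le] at hcont
  rw [← nhdsWithin_Ioc_eq_nhdsGT hab]
  simpa using (hcont.mono Ioc_subset_Icc_self).tendsto

theorem monotoneOn_mul_exp_of_neg_mul_le_deriv {D : Set ℝ} (hD : Convex ℝ D) (hDo : IsOpen D)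
    {E E' P ρ : ℝ → ℝ} (hE : ∀ t ∈ D, HasDerivAt E (E' t) t) (hP : ∀ t ∈ D, HasDerivAt P (ρ t) t)
    (hineq : ∀ t ∈ D, -ρ t * E t ≤ E' t) :
    MonotoneOn (fun t => E t * exp (P t)) D := by
  have hG : ∀ t ∈ D, HasDerivAt (fun t => E t * exp (P t))
      ((E' t + ρ t * E t) * exp (P t)) t := by
    intro t ht
    exact ((hE t ht).mul (hP t ht).exp).congr_deriv (by ring)
  refine monotoneOn_of_hasDerivWithinAt_nonneg (f' := fun t => (E' t + ρ t * E t) * exp (P t)) hD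
    (fun t ht => (hG t ht).continuousAt.continuousWithinAt) ?_ ?_ <;> rw [hDo.interior_eq]
  · exact fun t ht => (hG t ht).hasDerivWithinAt
  · intro t ht
    have : 0 ≤ E' t + ρ t * E t := by linarith [hineq t ht]
    positivity

theorem exp_trick_convergence_general
    (t₀ : ℝ) (ht₀ : 0 < t₀)
    (ρ E E' : ℝ → ℝ)
    (hρcont : ContinuousOn ρ (Set.Ioc 0 t₀))
    (hρint : IntegrableOn ρ (Set.Ioc 0 t₀))
    (hE : ∀ t ∈ Set.Ioc (0:ℝ) t₀, HasDerivAt E (E' t) t)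
    (hEnonneg : ∀ t ∈ Set.Ioc (0:ℝ) t₀, 0 ≤ E t)
    (hIneq : ∀ t ∈ Set.Ioc (0:ℝ) t₀, E' t ≥ -ρ t * E t) :
    ∃ L : ℝ, Filter.Tendsto E (nhdsWithin 0 (Set.Ioi 0)) (nhds L) := by
  set P : ℝ → ℝ := fun x => ∫ s in 0..x, ρ s
  set G : ℝ → ℝ := fun t => E t * exp (P t)
  have hGmono : MonotoneOn G (Ioo 0 t₀) :=
    monotoneOn_mul_exp_of_neg_mul_le_deriv (convex_Ioo 0 t₀) isOpen_Ioo
      (fun t ht => hE t (Ioo_subset_Ioc_self ht))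
      (fun t ht => hasDerivAt_intervalIntegral_of_continuousOn_Ioc hρint hρcont ht)
      (fun t ht => hIneq t (Ioo_subset_Ioc_self ht))
  have hGbdd : BddBelow (G '' Ioo 0 t₀) := ⟨0, by
    rintro _ ⟨t, ht, rfl⟩
    exact mul_nonneg (hEnonneg t (Ioo_subset_Ioc_self ht)) (exp_pos _).le⟩
  have hGlim := hGmono.tendsto_nhdsWithin_Ioo_right (nonempty_Ioo.2 ht₀) hGbdd
  have hPlim := (tendsto_intervalIntegral_nhdsGT ht₀ hρint).neg.rexp
  refine ⟨_, (hGlim.mul hPlim).congr fun t => ?_⟩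
  simp only [G, P, mul_assoc, ← exp_add, add_neg_cancel, exp_zero, mul_one]

/-- If `E ≥ 0` satisfies `E' ≥ -ρ·E` on `(0, t₀]` with `ρ` continuous, positive and
integrable on `(0, t₀]`, then `E(t)` converges to a finite limit as `t → 0⁺`. -/
theorem exp_trick_convergence
    (t₀ : ℝ) (ht₀ : 0 < t₀)
    (ρ E E' : ℝ → ℝ)
    (hρcont : ContinuousOn ρ (Set.Ioc 0 t₀))
    (hρpos : ∀ t ∈ Set.Ioc (0:ℝ) t₀, 0 < ρ t)
    (hρint : IntegrableOn ρ (Set.Ioc 0 t₀))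
    (hE : ∀ t ∈ Set.Ioc (0:ℝ) t₀, HasDerivAt E (E' t) t)
    (hEnonneg : ∀ t ∈ Set.Ioc (0:ℝ) t₀, 0 ≤ E t)
    (hIneq : ∀ t ∈ Set.Ioc (0:ℝ) t₀, E' t ≥ -ρ t * E t) :
    ∃ L : ℝ, Filter.Tendsto E (nhdsWithin 0 (Set.Ioi 0)) (nhds L) :=
  exp_trick_convergence_general t₀ ht₀ ρ E E' hρcont hρint hE hEnonneg hIneq
end

section
/- For all x ≥ 0 and y ≥ 0 with x + y ≤ X, one has w(x + y) ≥ w(x) · cosh(y). -/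
/-!
Fix `x` and compare `w` on `[x, x + y]` with `w x * cosh (· - x)`, which solves `f'' = f` with the
same value at `x` and zero slope there. The difference `f` satisfies `f'' ≥ f`, `f x = 0` and
`f' x = w' x ≥ 0`, the last because `w'' ≥ w ≥ 0` makes `w'` nondecreasing from `w' 0 ≥ 0`.
A function with `f'' ≥ f` and nonnegative initial data stays nonnegative: the Wronskian-type
quantity `f' cosh - f sinh` has derivative `(f'' - f) cosh ≥ 0`, and it is the numerator of the
derivative of `f / cosh`.
-/

open Set Real

lemma monotoneOn_Icc_of_hasDerivWithinAt_nonneg {a b : ℝ} {f f' : ℝ → ℝ}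
    (hf : ∀ t ∈ Icc a b, HasDerivWithinAt f (f' t) (Icc a b) t)
    (hf' : ∀ t ∈ Icc a b, 0 ≤ f' t) : MonotoneOn f (Icc a b) := by
  refine monotoneOn_of_hasDerivWithinAt_nonneg (f' := f') (convex_Icc a b)
    (fun t ht => (hf t ht).continuousWithinAt) ?_ ?_
  · rw [interior_Icc]
    exact fun t ht => (hf t (Ioo_subset_Icc_self ht)).mono Ioo_subset_Icc_self
  · rw [interior_Icc]
    exact fun t ht => hf' t (Ioo_subset_Icc_self ht)

lemma hasDerivAt_cosh_sub (a t : ℝ) :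
    HasDerivAt (fun s => cosh (s - a)) (sinh (t - a)) t := by
  simpa using ((hasDerivAt_id t).sub_const a).cosh

lemma hasDerivAt_sinh_sub (a t : ℝ) :
    HasDerivAt (fun s => sinh (s - a)) (cosh (t - a)) t := by
  simpa using ((hasDerivAt_id t).sub_const a).sinh

section SecondOrderComparison

variable {a b : ℝ} {f f' f'' : ℝ → ℝ}

lemma monotoneOn_wronskian_cosh
    (hf : ∀ t ∈ Icc a b, HasDerivWithinAt f (f' t) (Icc a b) t)
    (hf' : ∀ t ∈ Icc a b, HasDerivWithinAt f' (f'' t) (Icc a b) t)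
    (hff'' : ∀ t ∈ Icc a b, f t ≤ f'' t) :
    MonotoneOn (fun t => f' t * cosh (t - a) - f t * sinh (t - a)) (Icc a b) := by
  refine monotoneOn_Icc_of_hasDerivWithinAt_nonneg (f' := fun t => (f'' t - f t) * cosh (t - a))
    (fun t ht => ?_) (fun t ht => mul_nonneg (sub_nonneg.2 (hff'' t ht)) (cosh_pos _).le)
  refine (((hf' t ht).mul (hasDerivAt_cosh_sub a t).hasDerivWithinAt).sub
    ((hf t ht).mul (hasDerivAt_sinh_sub a t).hasDerivWithinAt)).congr_deriv ?_
  ring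

lemma nonneg_of_le_second_deriv
    (hf : ∀ t ∈ Icc a b, HasDerivWithinAt f (f' t) (Icc a b) t)
    (hf' : ∀ t ∈ Icc a b, HasDerivWithinAt f' (f'' t) (Icc a b) t)
    (hff'' : ∀ t ∈ Icc a b, f t ≤ f'' t) (ha : 0 ≤ f a) (ha' : 0 ≤ f' a) :
    ∀ t ∈ Icc a b, 0 ≤ f t := by
  intro t ht
  have hab : a ≤ b := ht.1.trans ht.2
  have hwronskian : ∀ s ∈ Icc a b, 0 ≤ f' s * cosh (s - a) - f s * sinh (s - a) := by
    intro s hs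
    have := monotoneOn_wronskian_cosh hf hf' hff'' (left_mem_Icc.2 hab) hs hs.1
    exact ha'.trans (by simpa using this)
  have hquotient : MonotoneOn (fun s => f s / cosh (s - a)) (Icc a b) :=
    monotoneOn_Icc_of_hasDerivWithinAt_nonneg
      (fun s hs => (hf s hs).div (hasDerivAt_cosh_sub a s).hasDerivWithinAt (cosh_pos _).ne')
      (fun s hs => div_nonneg (hwronskian s hs) (sq_nonneg _))
  have hquot_t : 0 ≤ f t / cosh (t - a) := by
    exact ha.trans (by simpa using hquotient (left_mem_Icc.2 hab) ht ht.1)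
  simpa [(cosh_pos (t - a)).ne'] using mul_nonneg hquot_t (cosh_pos (t - a)).le

end SecondOrderComparison

theorem super_additive_general
    (X : ℝ)
    (w w' w'' : ℝ → ℝ)
    (hw' : ∀ x ∈ Set.Icc (0:ℝ) X, HasDerivWithinAt w (w' x) (Set.Icc 0 X) x)
    (hw'' : ∀ x ∈ Set.Icc (0:ℝ) X, HasDerivWithinAt w' (w'' x) (Set.Icc 0 X) x)
    (hwnonneg : ∀ x ∈ Set.Icc (0:ℝ) X, 0 ≤ w x)
    (hconvex : ∀ x ∈ Set.Icc (0:ℝ) X, w x ≤ w'' x)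
    (hw'0 : 0 ≤ w' 0) :
    ∀ x y : ℝ, 0 ≤ x → 0 ≤ y → x + y ≤ X →
      w x * Real.cosh y ≤ w (x + y) := by
  intro x y hx hy hxy
  have hxX : x ∈ Icc 0 X := ⟨hx, by linarith⟩
  have hw'x : 0 ≤ w' x :=
    hw'0.trans <| monotoneOn_Icc_of_hasDerivWithinAt_nonneg hw''
      (fun t ht => (hwnonneg t ht).trans (hconvex t ht)) ⟨le_rfl, hx.trans hxX.2⟩ hxX hx
  have hsub : Icc x (x + y) ⊆ Icc 0 X := Icc_subset_Icc hx hxy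
  have hcomparison := nonneg_of_le_second_deriv (a := x) (b := x + y)
    (f := fun t => w t - w x * cosh (t - x)) (f' := fun t => w' t - w x * sinh (t - x))
    (f'' := fun t => w'' t - w x * cosh (t - x))
    (fun t ht => ((hw' t (hsub ht)).mono hsub).sub
      ((hasDerivAt_cosh_sub x t).hasDerivWithinAt.const_mul (w x)))
    (fun t ht => ((hw'' t (hsub ht)).mono hsub).sub
      ((hasDerivAt_sinh_sub x t).hasDerivWithinAt.const_mul (w x)))
    (fun t ht => by simpa using hconvex t (hsub ht)) (by simp) (by simpa using hw'x)
    (x + y) (right_mem_Icc.2 (by linarith))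
  simpa using hcomparison

/-- Convexity estimate: if `w ≥ 0`, `w'' ≥ w` on `[0,X]` and `w'(0) ≥ 0`, then
`w(x+y) ≥ w(x)·cosh(y)` for `x, y ≥ 0` with `x + y ≤ X`. -/
theorem super_additive
    (X : ℝ) (hX : 0 < X)
    (w w' w'' : ℝ → ℝ)
    (hw' : ∀ x ∈ Set.Icc (0:ℝ) X, HasDerivWithinAt w (w' x) (Set.Icc 0 X) x)
    (hw'' : ∀ x ∈ Set.Icc (0:ℝ) X, HasDerivWithinAt w' (w'' x) (Set.Icc 0 X) x)
    (hw''cont : ContinuousOn w'' (Set.Icc 0 X))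
    (hwnonneg : ∀ x ∈ Set.Icc (0:ℝ) X, 0 ≤ w x)
    (hconvex : ∀ x ∈ Set.Icc (0:ℝ) X, w x ≤ w'' x)
    (hw'0 : 0 ≤ w' 0) :
    ∀ x y : ℝ, 0 ≤ x → 0 ≤ y → x + y ≤ X →
      w x * Real.cosh y ≤ w (x + y) :=
  super_additive_general X w w' w'' hw' hw'' hwnonneg hconvex hw'0
end

section
/- One has ∫₀^{X/2} w(x) dx ≤ (1 / cosh(X/2)) · ∫_{X/2}^{X} w(x) dx. -/
/-!
Since `w'' ≥ w ≥ 0`, `w'` is nondecreasing, so `w' ≥ w'(0) ≥ 0`. For fixed `x`, the function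
`g s = w s - cosh (s - x) * w x` satisfies `g'' ≥ g`, `g x = 0` and `g' x = w' x ≥ 0`; then
`e^{-s} (g' + g)` and afterwards `e^s g` are nondecreasing, so `g ≥ 0`. This gives
`cosh (X/2) * w x ≤ w (x + X/2)` for `x ∈ [0, X/2]`, which integrates to the estimate.
-/

open Set Real

theorem monotoneOn_of_forall_hasDerivWithinAt_nonneg {D : Set ℝ} (hD : Convex ℝ D)
    {f f' : ℝ → ℝ} (hf : ∀ x ∈ D, HasDerivWithinAt f (f' x) D x) (hf' : ∀ x ∈ D, 0 ≤ f' x) :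
    MonotoneOn f D :=
  monotoneOn_of_hasDerivWithinAt_nonneg hD (HasDerivWithinAt.continuousOn hf)
    (fun x hx ↦ (hf x (interior_subset hx)).mono interior_subset)
    (fun x hx ↦ hf' x (interior_subset hx))

theorem nonneg_of_const_mul_le_deriv {a b c : ℝ} {f f' : ℝ → ℝ}
    (hf : ∀ s ∈ Icc a b, HasDerivWithinAt f (f' s) (Icc a b) s)
    (hle : ∀ s ∈ Icc a b, c * f s ≤ f' s) (ha : 0 ≤ f a) :
    ∀ s ∈ Icc a b, 0 ≤ f s := by
  have hderiv : ∀ s ∈ Icc a b, HasDerivWithinAt (fun s ↦ exp (-c * s) * f s)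
      (exp (-c * s) * (f' s - c * f s)) (Icc a b) s := fun s hs ↦ by
    have hexp := (((hasDerivAt_id' s).const_mul (-c)).exp).hasDerivWithinAt (s := Icc a b)
    exact (hexp.mul (hf s hs)).congr_deriv (by ring)
  have hmono := monotoneOn_of_forall_hasDerivWithinAt_nonneg (convex_Icc a b) hderiv
    fun s hs ↦ mul_nonneg (exp_pos _).le (sub_nonneg.mpr (hle s hs))
  intro s hs
  have : exp (-c * a) * f a ≤ exp (-c * s) * f s :=
    hmono (left_mem_Icc.mpr (hs.1.trans hs.2)) hs hs.1
  exact nonneg_of_mul_nonneg_right ((by positivity : (0:ℝ) ≤ _).trans this) (exp_pos _)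

theorem nonneg_of_self_le_second_deriv {a b : ℝ} {g g' g'' : ℝ → ℝ}
    (hg : ∀ s ∈ Icc a b, HasDerivWithinAt g (g' s) (Icc a b) s)
    (hg' : ∀ s ∈ Icc a b, HasDerivWithinAt g' (g'' s) (Icc a b) s)
    (hle : ∀ s ∈ Icc a b, g s ≤ g'' s) (ha : 0 ≤ g a) (ha' : 0 ≤ g' a + g a) :
    ∀ s ∈ Icc a b, 0 ≤ g s := by
  have hsum : ∀ s ∈ Icc a b, 0 ≤ g' s + g s :=
    nonneg_of_const_mul_le_deriv (c := 1) (fun s hs ↦ (hg' s hs).add (hg s hs))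
      (fun s hs ↦ by linarith [hle s hs]) ha'
  exact nonneg_of_const_mul_le_deriv (c := -1) hg (fun s hs ↦ by linarith [hsum s hs]) ha

theorem cosh_sub_mul_le_of_self_le_second_deriv {x y : ℝ} {w w' w'' : ℝ → ℝ}
    (hw : ∀ s ∈ Icc x y, HasDerivWithinAt w (w' s) (Icc x y) s)
    (hw' : ∀ s ∈ Icc x y, HasDerivWithinAt w' (w'' s) (Icc x y) s)
    (hle : ∀ s ∈ Icc x y, w s ≤ w'' s) (hx : 0 ≤ w' x) (hxy : x ≤ y) :
    cosh (y - x) * w x ≤ w y := by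
  have hcosh : ∀ s, HasDerivAt (fun s ↦ cosh (s - x)) (sinh (s - x)) s := fun s ↦ by
    simpa using ((hasDerivAt_id' s).sub_const x).cosh
  have hsinh : ∀ s, HasDerivAt (fun s ↦ sinh (s - x)) (cosh (s - x)) s := fun s ↦ by
    simpa using ((hasDerivAt_id' s).sub_const x).sinh
  have key := nonneg_of_self_le_second_deriv (g := fun s ↦ w s - cosh (s - x) * w x)
    (fun s hs ↦ (hw s hs).sub (((hcosh s).hasDerivWithinAt).mul_const (w x)))
    (fun s hs ↦ (hw' s hs).sub (((hsinh s).hasDerivWithinAt).mul_const (w x)))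
    (fun s hs ↦ by linarith [hle s hs]) (by simp) (by simpa using hx)
    y (right_mem_Icc.mpr hxy)
  linarith

theorem half_mass_estimate_general
    (X : ℝ) (hX : 0 < X)
    (w w' w'' : ℝ → ℝ)
    (hw' : ∀ x ∈ Set.Icc (0:ℝ) X, HasDerivWithinAt w (w' x) (Set.Icc 0 X) x)
    (hw'' : ∀ x ∈ Set.Icc (0:ℝ) X, HasDerivWithinAt w' (w'' x) (Set.Icc 0 X) x)
    (hwnonneg : ∀ x ∈ Set.Icc (0:ℝ) X, 0 ≤ w x)
    (hconvex : ∀ x ∈ Set.Icc (0:ℝ) X, w x ≤ w'' x)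
    (hw'0 : 0 ≤ w' 0) :
    (∫ x in (0:ℝ)..(X/2), w x) ≤ (1 / Real.cosh (X/2)) * ∫ x in (X/2)..X, w x := by
  have hw'_nonneg : ∀ x ∈ Icc 0 X, 0 ≤ w' x := fun x hx ↦
    hw'0.trans <| monotoneOn_of_forall_hasDerivWithinAt_nonneg (convex_Icc 0 X) hw''
      (fun s hs ↦ (hwnonneg s hs).trans (hconvex s hs)) (left_mem_Icc.mpr hX.le) hx hx.1
  have hshift : ∀ x ∈ Icc 0 (X / 2), cosh (X / 2) * w x ≤ w (x + X / 2) := fun x hx ↦ by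
    have hsub : Icc x (x + X / 2) ⊆ Icc 0 X := Icc_subset_Icc hx.1 (by linarith [hx.2])
    simpa using cosh_sub_mul_le_of_self_le_second_deriv
      (fun s hs ↦ (hw' s (hsub hs)).mono hsub) (fun s hs ↦ (hw'' s (hsub hs)).mono hsub)
      (fun s hs ↦ hconvex s (hsub hs))
      (hw'_nonneg x (hsub (left_mem_Icc.mpr (by linarith)))) (by linarith)
  have hcont : ContinuousOn w (Icc 0 X) := HasDerivWithinAt.continuousOn hw'
  have hint : ∀ d, 0 ≤ d → d ≤ X / 2 →
      IntervalIntegrable (fun x ↦ w (x + d)) MeasureTheory.volume 0 (X / 2) := fun d hd hdX ↦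
    ContinuousOn.intervalIntegrable_of_Icc (by linarith) <|
      hcont.comp (continuous_add_const d).continuousOn
        fun x hx ↦ ⟨by linarith [hx.1], by linarith [hx.2]⟩
  have hcosh := cosh_pos (X / 2)
  calc (∫ x in (0:ℝ)..(X / 2), w x)
      = 1 / cosh (X / 2) * ∫ x in (0:ℝ)..(X / 2), cosh (X / 2) * w x := by
        rw [intervalIntegral.integral_const_mul]; field_simp
    _ ≤ 1 / cosh (X / 2) * ∫ x in (0:ℝ)..(X / 2), w (x + X / 2) := by
        gcongr
        refine intervalIntegral.integral_mono_on (by linarith) ?_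
          (hint _ (by linarith) le_rfl) hshift
        simpa using (hint 0 le_rfl (by linarith)).const_mul (cosh (X / 2))
    _ = 1 / cosh (X / 2) * ∫ x in (X / 2)..X, w x := by
        rw [intervalIntegral.integral_comp_add_right, zero_add, add_halves]

/-- If `w ≥ 0`, `w'' ≥ w` on `[0,X]` and `w'(0) ≥ 0`, then
`∫₀^{X/2} w ≤ (1/cosh(X/2)) ∫_{X/2}^X w`. -/
theorem half_mass_estimate
    (X : ℝ) (hX : 0 < X)
    (w w' w'' : ℝ → ℝ)
    (hw' : ∀ x ∈ Set.Icc (0:ℝ) X, HasDerivWithinAt w (w' x) (Set.Icc 0 X) x)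
    (hw'' : ∀ x ∈ Set.Icc (0:ℝ) X, HasDerivWithinAt w' (w'' x) (Set.Icc 0 X) x)
    (hw''cont : ContinuousOn w'' (Set.Icc 0 X))
    (hwnonneg : ∀ x ∈ Set.Icc (0:ℝ) X, 0 ≤ w x)
    (hconvex : ∀ x ∈ Set.Icc (0:ℝ) X, w x ≤ w'' x)
    (hw'0 : 0 ≤ w' 0) :
    (∫ x in (0:ℝ)..(X/2), w x) ≤ (1 / Real.cosh (X/2)) * ∫ x in (X/2)..X, w x :=
  half_mass_estimate_general X hX w w' w'' hw' hw'' hwnonneg hconvex hw'0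
end

section
/- Let p : [0,X] → ℝ be nonnegative, antitone (monotone decreasing), and integrable on [0,X]. Then ∫₀^{X} p(x) · w(x) dx ≤ (p(0)/cosh(X/2) + p(X/2)) · ∫₀^{X} w(x) dx. -/
/-!
Since `(w' + w)' - (w' + w) = w'' - w ≥ 0`, Grönwall's inequality makes `w' + w` grow at least
like `exp`; then `w - w y * cosh (· - y)` vanishes at `y` and its derivative is at least its own
negative, so a second Grönwall estimate gives `w y * cosh (x - y) ≤ w x` for `y ≤ x` (using that
`w'` is nondecreasing, so `w' y ≥ w' 0 ≥ 0`). With `x = y + X/2` this yields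
`cosh (X/2) ∫₀^{X/2} w ≤ ∫_{X/2}^X w`, and bounding the decreasing weight `p` by `p 0` on the
first half and by `p (X/2)` on the second gives the claim.
-/

open Set Real intervalIntegral

theorem mul_exp_le_of_mul_le_deriv {f f' : ℝ → ℝ} {a b c : ℝ}
    (hf : ∀ x ∈ Icc a b, HasDerivWithinAt f (f' x) (Icc a b) x)
    (bound : ∀ x ∈ Icc a b, c * f x ≤ f' x) :
    ∀ x ∈ Icc a b, f a * exp (c * (x - a)) ≤ f x := by
  have hgron := le_gronwallBound_of_liminf_deriv_right_le (f := -f) (f' := -f') (ε := 0)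
    (fun x hx ↦ (hf x hx).continuousWithinAt.neg)
    (fun x hx _ hr ↦ (((hf x (Ico_subset_Icc_self hx)).mono_of_mem_nhdsWithin
      (Icc_mem_nhdsGE_of_mem hx)).neg.liminf_right_slope_le hr))
    le_rfl (fun x hx ↦ by simpa using bound x (Ico_subset_Icc_self hx))
  intro x hx
  simpa [gronwallBound_ε0] using hgron x hx

theorem mul_cosh_sub_le {w w' w'' : ℝ → ℝ} {a b : ℝ}
    (hw' : ∀ x ∈ Icc a b, HasDerivWithinAt w (w' x) (Icc a b) x)
    (hw'' : ∀ x ∈ Icc a b, HasDerivWithinAt w' (w'' x) (Icc a b) x)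
    (hle : ∀ x ∈ Icc a b, w x ≤ w'' x) (ha : 0 ≤ w' a) :
    ∀ x ∈ Icc a b, w a * cosh (x - a) ≤ w x := by
  have hgrowth : ∀ x ∈ Icc a b, (w' a + w a) * exp (x - a) ≤ w' x + w x := by
    simpa using mul_exp_le_of_mul_le_deriv (c := 1) (f := fun x ↦ w' x + w x)
      (fun x hx ↦ (hw'' x hx).add (hw' x hx)) (fun x hx ↦ by linarith [hle x hx])
  have hgap := mul_exp_le_of_mul_le_deriv (c := -1)
    (f := fun x ↦ w x - w a * cosh (x - a)) (f' := fun x ↦ w' x - w a * sinh (x - a))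
    (fun x hx ↦ (hw' x hx).sub
      (((hasDerivAt_cosh (x - a)).comp_sub_const x a).hasDerivWithinAt.const_mul (w a)))
    (fun x hx ↦ by
      have h := hgrowth x hx
      rw [← cosh_add_sinh] at h
      linarith [mul_nonneg ha (cosh_add_sinh (x - a) ▸ exp_pos (x - a)).le])
  intro x hx
  simpa using hgap x hx

theorem mul_cosh_sub_le_of_nonneg {w w' w'' : ℝ → ℝ} {a b : ℝ}
    (hw' : ∀ x ∈ Icc a b, HasDerivWithinAt w (w' x) (Icc a b) x)
    (hw'' : ∀ x ∈ Icc a b, HasDerivWithinAt w' (w'' x) (Icc a b) x)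
    (hw : ∀ x ∈ Icc a b, 0 ≤ w x) (hle : ∀ x ∈ Icc a b, w x ≤ w'' x) (ha : 0 ≤ w' a)
    {y x : ℝ} (hy : y ∈ Icc a b) (hx : x ∈ Icc a b) (hyx : y ≤ x) :
    w y * cosh (x - y) ≤ w x := by
  have hw'y : w' a ≤ w' y := by
    simpa using mul_exp_le_of_mul_le_deriv (c := 0) hw''
      (fun t ht ↦ by simpa using (hw t ht).trans (hle t ht)) y hy
  have hsub : Icc y b ⊆ Icc a b := Icc_subset_Icc hy.1 le_rfl
  exact mul_cosh_sub_le (fun t ht ↦ (hw' t (hsub ht)).mono hsub)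
    (fun t ht ↦ (hw'' t (hsub ht)).mono hsub) (fun t ht ↦ hle t (hsub ht)) (ha.trans hw'y)
    x ⟨hyx, hx.2⟩

theorem intervalIntegrable_mul_of_antitoneOn {p w : ℝ → ℝ} {a b : ℝ} (hab : a ≤ b)
    (hp : AntitoneOn p (Icc a b)) (hw : ContinuousOn w (Icc a b)) :
    IntervalIntegrable (fun x ↦ p x * w x) MeasureTheory.volume a b := by
  rw [← uIcc_of_le hab] at hp hw
  exact hp.intervalIntegrable.mul_continuousOn hw

theorem integral_mul_le_mul_integral_of_antitoneOn {p w : ℝ → ℝ} {a b : ℝ} (hab : a ≤ b)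
    (hp : AntitoneOn p (Icc a b)) (hw : ContinuousOn w (Icc a b))
    (hw0 : ∀ x ∈ Icc a b, 0 ≤ w x) :
    ∫ x in a..b, p x * w x ≤ p a * ∫ x in a..b, w x := by
  rw [← integral_const_mul]
  refine integral_mono_on hab (intervalIntegrable_mul_of_antitoneOn hab hp hw)
    ((hw.intervalIntegrable_of_Icc hab).const_mul _) fun x hx ↦ ?_
  exact mul_le_mul_of_nonneg_right (hp ⟨le_rfl, hab⟩ hx hx.1) (hw0 x hx)

theorem integral_mul_le_add_of_antitoneOn {p w : ℝ → ℝ} {a m b : ℝ} (ham : a ≤ m) (hmb : m ≤ b)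
    (hp : AntitoneOn p (Icc a b)) (hw : ContinuousOn w (Icc a b))
    (hw0 : ∀ x ∈ Icc a b, 0 ≤ w x) :
    ∫ x in a..b, p x * w x ≤ p a * (∫ x in a..m, w x) + p m * ∫ x in m..b, w x := by
  have hleft : Icc a m ⊆ Icc a b := Icc_subset_Icc le_rfl hmb
  have hright : Icc m b ⊆ Icc a b := Icc_subset_Icc ham le_rfl
  rw [← integral_add_adjacent_intervals
    (intervalIntegrable_mul_of_antitoneOn ham (hp.mono hleft) (hw.mono hleft))
    (intervalIntegrable_mul_of_antitoneOn hmb (hp.mono hright) (hw.mono hright))]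
  exact add_le_add
    (integral_mul_le_mul_integral_of_antitoneOn ham (hp.mono hleft) (hw.mono hleft)
      fun x hx ↦ hw0 x (hleft hx))
    (integral_mul_le_mul_integral_of_antitoneOn hmb (hp.mono hright) (hw.mono hright)
      fun x hx ↦ hw0 x (hright hx))

theorem cosh_mul_integral_le_integral_of_nonneg {w w' w'' : ℝ → ℝ} {a b : ℝ} (hab : a ≤ b)
    (hw' : ∀ x ∈ Icc a b, HasDerivWithinAt w (w' x) (Icc a b) x)
    (hw'' : ∀ x ∈ Icc a b, HasDerivWithinAt w' (w'' x) (Icc a b) x)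
    (hw : ∀ x ∈ Icc a b, 0 ≤ w x) (hle : ∀ x ∈ Icc a b, w x ≤ w'' x) (ha : 0 ≤ w' a) :
    cosh ((b - a) / 2) * ∫ x in a..(a + b) / 2, w x ≤ ∫ x in (a + b) / 2..b, w x := by
  have hwc : ContinuousOn w (Icc a b) := fun x hx ↦ (hw' x hx).continuousWithinAt
  have ham : a ≤ (a + b) / 2 := by linarith
  have hmb : (a + b) / 2 ≤ b := by linarith
  have hshift : MapsTo (· + (b - a) / 2) (Icc a ((a + b) / 2)) (Icc a b) :=
    fun x hx ↦ ⟨by linarith [hx.1], by linarith [hx.2]⟩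
  calc _ = ∫ x in a..(a + b) / 2, cosh ((b - a) / 2) * w x := (integral_const_mul _ _).symm
    _ ≤ ∫ x in a..(a + b) / 2, w (x + (b - a) / 2) := by
      refine integral_mono_on ham
        (((hwc.mono (Icc_subset_Icc le_rfl hmb)).intervalIntegrable_of_Icc ham).const_mul _)
        ((hwc.comp (continuous_add_const _).continuousOn hshift).intervalIntegrable_of_Icc ham)
        fun x hx ↦ ?_
      simpa [mul_comm] using mul_cosh_sub_le_of_nonneg hw' hw'' hw hle ha
        ⟨hx.1, hx.2.trans hmb⟩ (hshift hx) (by linarith)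
    _ = ∫ x in (a + b) / 2..b, w x := by rw [integral_comp_add_right]; congr 1 <;> ring

theorem convex_decreasing_weight_general
    (X : ℝ) (hX : 0 < X)
    (w w' w'' : ℝ → ℝ)
    (hw' : ∀ x ∈ Set.Icc (0:ℝ) X, HasDerivWithinAt w (w' x) (Set.Icc 0 X) x)
    (hw'' : ∀ x ∈ Set.Icc (0:ℝ) X, HasDerivWithinAt w' (w'' x) (Set.Icc 0 X) x)
    (hwnonneg : ∀ x ∈ Set.Icc (0:ℝ) X, 0 ≤ w x)
    (hconvex : ∀ x ∈ Set.Icc (0:ℝ) X, w x ≤ w'' x)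
    (hw'0 : 0 ≤ w' 0)
    (p : ℝ → ℝ)
    (hpnonneg : ∀ x ∈ Set.Icc (0:ℝ) X, 0 ≤ p x)
    (hpanti : AntitoneOn p (Set.Icc 0 X)) :
    (∫ x in (0:ℝ)..X, p x * w x)
      ≤ (p 0 / Real.cosh (X/2) + p (X/2)) * ∫ x in (0:ℝ)..X, w x := by
  have hX2 : 0 ≤ X / 2 := by linarith
  have hX2' : X / 2 ≤ X := by linarith
  have hwc : ContinuousOn w (Icc 0 X) := fun x hx ↦ (hw' x hx).continuousWithinAt
  have hsplit : (∫ x in 0..X / 2, w x) + ∫ x in X / 2..X, w x = ∫ x in 0..X, w x :=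
    integral_add_adjacent_intervals
    ((hwc.mono (Icc_subset_Icc le_rfl hX2')).intervalIntegrable_of_Icc hX2)
    ((hwc.mono (Icc_subset_Icc hX2 le_rfl)).intervalIntegrable_of_Icc hX2')
  have hcosh : cosh (X / 2) * ∫ x in 0..X / 2, w x ≤ ∫ x in X / 2..X, w x := by
    simpa using cosh_mul_integral_le_integral_of_nonneg hX.le hw' hw'' hwnonneg hconvex hw'0
  have hI₁ : 0 ≤ ∫ x in 0..X / 2, w x :=
    integral_nonneg hX2 fun x hx ↦ hwnonneg x ⟨hx.1, hx.2.trans hX2'⟩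
  have hp₀ : 0 ≤ p 0 / cosh (X / 2) := div_nonneg (hpnonneg 0 ⟨le_rfl, hX.le⟩) (cosh_pos _).le
  have hp₁ : 0 ≤ p (X / 2) := hpnonneg (X / 2) ⟨hX2, hX2'⟩
  rw [← hsplit]
  calc ∫ x in 0..X, p x * w x
      ≤ p 0 * (∫ x in 0..X / 2, w x) + p (X / 2) * ∫ x in X / 2..X, w x :=
        integral_mul_le_add_of_antitoneOn hX2 hX2' hpanti hwc hwnonneg
    _ = p 0 / cosh (X / 2) * (cosh (X / 2) * ∫ x in 0..X / 2, w x)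
          + p (X / 2) * ∫ x in X / 2..X, w x := by
        field_simp
    _ ≤ p 0 / cosh (X / 2) * (∫ x in X / 2..X, w x) + p (X / 2) * ∫ x in X / 2..X, w x := by
        gcongr
    _ ≤ (p 0 / cosh (X / 2) + p (X / 2)) * ((∫ x in 0..X / 2, w x) + ∫ x in X / 2..X, w x) := by
        nlinarith [mul_nonneg hp₀ hI₁, mul_nonneg hp₁ hI₁]

/-- If `w ≥ 0`, `w'' ≥ w` on `[0,X]`, `w'(0) ≥ 0`, and `p` is a nonnegative decreasing
integrable weight, then `∫₀^X p·w ≤ (p(0)/cosh(X/2) + p(X/2)) ∫₀^X w`. -/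
theorem convex_decreasing_weight
    (X : ℝ) (hX : 0 < X)
    (w w' w'' : ℝ → ℝ)
    (hw' : ∀ x ∈ Set.Icc (0:ℝ) X, HasDerivWithinAt w (w' x) (Set.Icc 0 X) x)
    (hw'' : ∀ x ∈ Set.Icc (0:ℝ) X, HasDerivWithinAt w' (w'' x) (Set.Icc 0 X) x)
    (hw''cont : ContinuousOn w'' (Set.Icc 0 X))
    (hwnonneg : ∀ x ∈ Set.Icc (0:ℝ) X, 0 ≤ w x)
    (hconvex : ∀ x ∈ Set.Icc (0:ℝ) X, w x ≤ w'' x)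
    (hw'0 : 0 ≤ w' 0)
    (p : ℝ → ℝ)
    (hpnonneg : ∀ x ∈ Set.Icc (0:ℝ) X, 0 ≤ p x)
    (hpanti : AntitoneOn p (Set.Icc 0 X))
    (hpint : IntervalIntegrable p MeasureTheory.volume 0 X) :
    (∫ x in (0:ℝ)..X, p x * w x)
      ≤ (p 0 / Real.cosh (X/2) + p (X/2)) * ∫ x in (0:ℝ)..X, w x :=
  convex_decreasing_weight_general X hX w w' w'' hw' hw'' hwnonneg hconvex hw'0 p hpnonneg hpanti
end

section
/- Let p : [0,X] → ℝ be positive, monotone increasing, and integrable on [0,X]. Then ∫₀^{X} w(x) dx ≤ (2 / p(X/2)) · ∫₀^{X} w(x) · p(x) dx. -/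
/-- If `w ≥ 0`, `w'' ≥ w` on `[0,X]`, `w'(0) ≥ 0`, and `p` is a positive increasing
integrable weight, then `∫₀^X w ≤ (2/p(X/2)) ∫₀^X w·p`. -/
theorem convex_increasing_weight
    (X : ℝ) (hX : 0 < X)
    (w w' w'' : ℝ → ℝ)
    (hw' : ∀ x ∈ Set.Icc (0:ℝ) X, HasDerivWithinAt w (w' x) (Set.Icc 0 X) x)
    (hw'' : ∀ x ∈ Set.Icc (0:ℝ) X, HasDerivWithinAt w' (w'' x) (Set.Icc 0 X) x)
    (hw''cont : ContinuousOn w'' (Set.Icc 0 X))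
    (hwnonneg : ∀ x ∈ Set.Icc (0:ℝ) X, 0 ≤ w x)
    (hconvex : ∀ x ∈ Set.Icc (0:ℝ) X, w x ≤ w'' x)
    (hw'0 : 0 ≤ w' 0)
    (p : ℝ → ℝ)
    (hppos : ∀ x ∈ Set.Icc (0:ℝ) X, 0 < p x)
    (hpmono : MonotoneOn p (Set.Icc 0 X))
    (hpint : IntervalIntegrable p MeasureTheory.volume 0 X) :
    (∫ x in (0:ℝ)..X, w x)
      ≤ (2 / p (X/2)) * ∫ x in (0:ℝ)..X, w x * p x := by
  have hint : interior (Set.Icc (0:ℝ) X) = Set.Ioo 0 X := interior_Icc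
  have hwcont : ContinuousOn w (Set.Icc 0 X) := fun x hx =>
    (hw' x hx).continuousWithinAt
  have hw'cont : ContinuousOn w' (Set.Icc 0 X) := fun x hx =>
    (hw'' x hx).continuousWithinAt
  -- w' is monotone on [0,X]
  have hw'mono : MonotoneOn w' (Set.Icc 0 X) := by
    apply monotoneOn_of_hasDerivWithinAt_nonneg (convex_Icc 0 X) hw'cont
    · intro x hx
      rw [hint] at hx ⊢
      exact (hw'' x (Set.Ioo_subset_Icc_self hx)).mono Set.Ioo_subset_Icc_self
    · intro x hx
      rw [hint] at hx
      have hx' := Set.Ioo_subset_Icc_self hx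
      exact le_trans (hwnonneg x hx') (hconvex x hx')
  -- w' ≥ 0 on [0,X]
  have hw'nonneg : ∀ x ∈ Set.Icc (0:ℝ) X, 0 ≤ w' x := fun x hx =>
    le_trans hw'0 (hw'mono (Set.left_mem_Icc.2 hX.le) hx hx.1)
  -- w is monotone on [0,X]
  have hwmono : MonotoneOn w (Set.Icc 0 X) := by
    apply monotoneOn_of_hasDerivWithinAt_nonneg (convex_Icc 0 X) hwcont
    · intro x hx
      rw [hint] at hx ⊢
      exact (hw' x (Set.Ioo_subset_Icc_self hx)).mono Set.Ioo_subset_Icc_self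
    · intro x hx
      rw [hint] at hx
      exact hw'nonneg x (Set.Ioo_subset_Icc_self hx)
  set m := X / 2 with hm
  have hm0 : 0 ≤ m := by positivity
  have hmX : m ≤ X := by linarith
  have hmmem : m ∈ Set.Icc (0:ℝ) X := ⟨hm0, hmX⟩
  have hpm : 0 < p m := hppos m hmmem
  -- integrability facts
  have hwint : ∀ a b, a ∈ Set.Icc (0:ℝ) X → b ∈ Set.Icc (0:ℝ) X →
      IntervalIntegrable w MeasureTheory.volume a b := fun a b ha hb =>
    (hwcont.mono (Set.uIcc_subset_Icc ha hb)).intervalIntegrable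
  have hwpint : IntervalIntegrable (fun x => w x * p x) MeasureTheory.volume 0 X := by
    have := hpint.mul_continuousOn (g := w) (by simpa [Set.uIcc_of_le hX.le] using hwcont)
    simpa [mul_comm] using this
  have hwpint1 : IntervalIntegrable (fun x => w x * p x) MeasureTheory.volume 0 m :=
    hwpint.mono_set (by rw [Set.uIcc_of_le hm0, Set.uIcc_of_le hX.le]; exact Set.Icc_subset_Icc le_rfl hmX)
  have hwpint2 : IntervalIntegrable (fun x => w x * p x) MeasureTheory.volume m X :=
    hwpint.mono_set (by rw [Set.uIcc_of_le hmX, Set.uIcc_of_le hX.le]; exact Set.Icc_subset_Icc hm0 le_rfl)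
  -- Step 1: ∫₀^m w ≤ ∫_m^X w
  have hstep1 : (∫ x in (0:ℝ)..m, w x) ≤ ∫ x in m..X, w x := by
    have hshift : (∫ x in (0:ℝ)..m, w x) = ∫ x in m..X, w (x - m) := by
      rw [intervalIntegral.integral_comp_sub_right (fun x => w x) m]
      norm_num [hm]
      ring_nf
    rw [hshift]
    apply intervalIntegral.integral_mono_on hmX
    · have : IntervalIntegrable w MeasureTheory.volume (m - m) (X - m) := by
        apply hwint <;> constructor <;> linarith
      simpa using this.comp_sub_right m
    · exact hwint m X hmmem (Set.right_mem_Icc.2 hX.le)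
    · intro x hx
      apply hwmono (a := x - m) (b := x)
      · constructor <;> [linarith [hx.1]; linarith [hx.2]]
      · constructor <;> [linarith [hx.1]; exact hx.2]
      · linarith
  -- Step 2: p m * ∫_m^X w ≤ ∫_m^X w p
  have hstep2 : p m * (∫ x in m..X, w x) ≤ ∫ x in m..X, w x * p x := by
    rw [← intervalIntegral.integral_const_mul]
    apply intervalIntegral.integral_mono_on hmX
    · exact (hwint m X hmmem (Set.right_mem_Icc.2 hX.le)).const_mul _
    · exact hwpint2
    · intro x hx
      have hxI : x ∈ Set.Icc (0:ℝ) X := ⟨le_trans hm0 hx.1, hx.2⟩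
      have h1 : p m ≤ p x := hpmono hmmem hxI hx.1
      have h2 : 0 ≤ w x := hwnonneg x hxI
      nlinarith
  -- Step 3: ∫_m^X w p ≤ ∫₀^X w p
  have hstep3 : (∫ x in m..X, w x * p x) ≤ ∫ x in (0:ℝ)..X, w x * p x := by
    rw [← intervalIntegral.integral_add_adjacent_intervals hwpint1 hwpint2]
    have h0 : 0 ≤ ∫ x in (0:ℝ)..m, w x * p x := by
      apply intervalIntegral.integral_nonneg hm0
      intro x hx
      have hxI : x ∈ Set.Icc (0:ℝ) X := ⟨hx.1, le_trans hx.2 hmX⟩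
      exact mul_nonneg (hwnonneg x hxI) (hppos x hxI).le
    linarith
  -- combine
  have hsplit : (∫ x in (0:ℝ)..X, w x)
      = (∫ x in (0:ℝ)..m, w x) + ∫ x in m..X, w x := by
    rw [intervalIntegral.integral_add_adjacent_intervals
      (hwint 0 m (Set.left_mem_Icc.2 hX.le) hmmem)
      (hwint m X hmmem (Set.right_mem_Icc.2 hX.le))]
  have key : (∫ x in (0:ℝ)..X, w x) ≤ 2 * ∫ x in m..X, w x := by
    rw [hsplit]; linarith
  have h2 : 2 * (∫ x in m..X, w x) ≤ (2 / p m) * ∫ x in (0:ℝ)..X, w x * p x := by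
    rw [div_mul_eq_mul_div, le_div_iff₀ hpm]
    calc 2 * (∫ x in m..X, w x) * p m = 2 * (p m * ∫ x in m..X, w x) := by ring
    _ ≤ 2 * ∫ x in m..X, w x * p x := by linarith
    _ ≤ 2 * ∫ x in (0:ℝ)..X, w x * p x := by linarith
  linarith
end

section
/- Suppose in addition that M ≥ 0 satisfies |a − cosh²(x)| ≤ M for all x ∈ [0,X], and that p : [0,X] → ℝ is a nonnegative integrable weight with p(x) ≤ L for all x ∈ [0,X]. Then ∫₀^{X} |R(x)|² · p(x) dx ≤ h⁴ · M² · X⁴ · L · ∫₀^{X} |u(x)|² dx. -/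
/-!
The ODE gives `|u''| ≤ h² M |u|`, so `K := ∫₀^X |u''| ≤ h² M ∫₀^X |u|`. Since `R(0) = R'(0) = 0`
and `|R'| = |u' - u'(0)| ≤ K`, the mean value theorem gives `|R| ≤ K X` on `[0,X]`, hence
`∫₀^X |R|² p ≤ K² X² · L X`. Cauchy–Schwarz, `(∫₀^X |u|)² ≤ X ∫₀^X |u|²`, finishes the estimate.
-/

open MeasureTheory Set intervalIntegral

section

variable {f f' f'' : ℝ → ℝ} {a b : ℝ}

theorem abs_sub_le_integral_abs_deriv
    (hf : ∀ x ∈ Icc a b, HasDerivWithinAt f (f' x) (Icc a b) x)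
    (hf' : ContinuousOn f' (Icc a b)) {x : ℝ} (hx : x ∈ Icc a b) :
    |f x - f a| ≤ ∫ t in a..b, |f' t| := by
  have hsub : Icc a x ⊆ Icc a b := Icc_subset_Icc le_rfl hx.2
  have hftc : ∫ t in a..x, f' t = f x - f a :=
    integral_eq_sub_of_hasDerivAt_of_le hx.1
      (fun t ht => (hf t (hsub ht)).continuousWithinAt.mono hsub)
      (fun t ht => (hf t (hsub (Ioo_subset_Icc_self ht))).hasDerivAt
        (Icc_mem_nhds ht.1 (ht.2.trans_le hx.2)))
      ((hf'.mono hsub).intervalIntegrable_of_Icc hx.1)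
  calc |f x - f a| = |∫ t in a..x, f' t| := by rw [hftc]
    _ ≤ ∫ t in a..x, |f' t| := abs_integral_le_integral_abs hx.1
    _ ≤ ∫ t in a..b, |f' t| :=
      integral_mono_interval le_rfl hx.1 hx.2
        (Filter.Eventually.of_forall fun _ => abs_nonneg _)
        (hf'.abs.intervalIntegrable_of_Icc (hx.1.trans hx.2))

theorem abs_sub_linear_approx_le
    (hf : ∀ x ∈ Icc a b, HasDerivWithinAt f (f' x) (Icc a b) x)
    (hf' : ∀ x ∈ Icc a b, HasDerivWithinAt f' (f'' x) (Icc a b) x)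
    (hf'' : ContinuousOn f'' (Icc a b)) {x : ℝ} (hx : x ∈ Icc a b) :
    |f x - (f a + f' a * (x - a))| ≤ (∫ t in a..b, |f'' t|) * (x - a) := by
  have hR : ∀ t ∈ Icc a b, HasDerivWithinAt (fun s => f s - (f a + f' a * (s - a)))
      (f' t - f' a) (Icc a b) t := fun t ht => by
    have hlin : HasDerivAt (fun s => f a + f' a * (s - a)) (f' a) t := by
      simpa using (((hasDerivAt_id t).sub_const a).const_mul (f' a)).const_add (f a)
    exact (hf t ht).sub hlin.hasDerivWithinAt
  have hbound : ∀ t ∈ Ico a b, ‖f' t - f' a‖ ≤ ∫ t in a..b, |f'' t| := fun t ht =>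
    abs_sub_le_integral_abs_deriv hf' hf'' (Ico_subset_Icc_self ht)
  simpa using norm_image_sub_le_of_norm_deriv_le_segment' hR hbound x hx

end

theorem sq_intervalIntegral_le_mul_integral_sq {f : ℝ → ℝ} {a b : ℝ} (hab : a ≤ b)
    (hf : IntervalIntegrable f volume a b)
    (hf2 : IntervalIntegrable (fun x => f x ^ 2) volume a b) :
    (∫ x in a..b, f x) ^ 2 ≤ (b - a) * ∫ x in a..b, f x ^ 2 := by
  -- `∫ (f - t)² ≥ 0` is a quadratic in `t` with nonpositive discriminant.
  have hquad : ∀ t : ℝ, 0 ≤ (b - a) * (t * t) + (-2 * ∫ x in a..b, f x) * t +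
      ∫ x in a..b, f x ^ 2 := fun t => by
    have hexp : ∫ x in a..b, (f x - t) ^ 2 =
        (b - a) * (t * t) + (-2 * ∫ x in a..b, f x) * t + ∫ x in a..b, f x ^ 2 := by
      have hlin : IntervalIntegrable (fun x => 2 * t * f x) volume a b := hf.const_mul _
      calc ∫ x in a..b, (f x - t) ^ 2 = ∫ x in a..b, (f x ^ 2 - 2 * t * f x) + t ^ 2 := by
            congr 1; ext x; ring
        _ = _ := by
            rw [integral_add (hf2.sub hlin) intervalIntegrable_const, integral_sub hf2 hlin,
              intervalIntegral.integral_const_mul, intervalIntegral.integral_const, smul_eq_mul]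
            ring
    exact hexp ▸ integral_nonneg hab fun x _ => sq_nonneg _
  have := discrim_le_zero hquad
  rw [discrim] at this
  linarith

theorem integral_mul_le_of_le_of_le {g p : ℝ → ℝ} {a b C L : ℝ} (hab : a ≤ b)
    (hg : ContinuousOn g (Icc a b)) (hp : IntervalIntegrable p volume a b) (hC : 0 ≤ C)
    (hgC : ∀ x ∈ Icc a b, g x ≤ C) (hp0 : ∀ x ∈ Icc a b, 0 ≤ p x)
    (hpL : ∀ x ∈ Icc a b, p x ≤ L) :
    ∫ x in a..b, g x * p x ≤ C * (L * (b - a)) := by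
  calc ∫ x in a..b, g x * p x ≤ ∫ x in a..b, C * p x :=
        integral_mono_on hab (hp.continuousOn_mul (uIcc_of_le hab ▸ hg)) (hp.const_mul C)
          fun x hx => mul_le_mul_of_nonneg_right (hgC x hx) (hp0 x hx)
    _ = C * ∫ x in a..b, p x := intervalIntegral.integral_const_mul C p
    _ ≤ C * (L * (b - a)) := by
      gcongr
      simpa [mul_comm] using integral_mono_on hab hp intervalIntegrable_const hpL

theorem duhamel_remainder_weighted_general
    (X : ℝ) (hX : 0 < X) (h a : ℝ)
    (u u' u'' : ℝ → ℝ)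
    (hu' : ∀ x ∈ Set.Icc (0:ℝ) X, HasDerivWithinAt u (u' x) (Set.Icc 0 X) x)
    (hu'' : ∀ x ∈ Set.Icc (0:ℝ) X, HasDerivWithinAt u' (u'' x) (Set.Icc 0 X) x)
    (hu''cont : ContinuousOn u'' (Set.Icc 0 X))
    (hode : ∀ x ∈ Set.Icc (0:ℝ) X,
      u'' x = h ^ 2 * (a - Real.cosh x ^ 2) * u x)
    (M : ℝ)
    (hMbound : ∀ x ∈ Set.Icc (0:ℝ) X, |a - Real.cosh x ^ 2| ≤ M)
    (p : ℝ → ℝ) (L : ℝ)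
    (hpnonneg : ∀ x ∈ Set.Icc (0:ℝ) X, 0 ≤ p x)
    (hpL : ∀ x ∈ Set.Icc (0:ℝ) X, p x ≤ L)
    (hpint : IntervalIntegrable p MeasureTheory.volume 0 X) :
    (∫ x in (0:ℝ)..X, |u x - (u 0 + u' 0 * x)| ^ 2 * p x)
      ≤ h ^ 4 * M ^ 2 * X ^ 4 * L * ∫ x in (0:ℝ)..X, |u x| ^ 2 := by
  have hX0 : (0 : ℝ) ∈ Icc 0 X := ⟨le_rfl, hX.le⟩
  have hL : 0 ≤ L := (hpnonneg 0 hX0).trans (hpL 0 hX0)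
  have hucont : ContinuousOn u (Icc 0 X) := fun x hx => (hu' x hx).continuousWithinAt
  set K := ∫ t in (0:ℝ)..X, |u'' t|
  have hK0 : 0 ≤ K := integral_nonneg hX.le fun _ _ => abs_nonneg _
  have hKu : K ≤ h ^ 2 * M * ∫ t in (0:ℝ)..X, |u t| := by
    rw [← intervalIntegral.integral_const_mul]
    refine integral_mono_on hX.le (hu''cont.abs.intervalIntegrable_of_Icc hX.le)
      ((hucont.abs.intervalIntegrable_of_Icc hX.le).const_mul _) fun t ht => ?_
    rw [hode t ht, abs_mul, abs_mul, abs_pow, sq_abs]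
    gcongr
    exact hMbound t ht
  have hR : ∀ x ∈ Icc 0 X, |u x - (u 0 + u' 0 * x)| ^ 2 ≤ (K * X) ^ 2 := fun x hx => by
    have := abs_sub_linear_approx_le hu' hu'' hu''cont hx
    rw [sub_zero] at this
    exact pow_le_pow_left₀ (abs_nonneg _) (this.trans (by gcongr; exact hx.2)) 2
  have hCS := sq_intervalIntegral_le_mul_integral_sq hX.le
    (hucont.abs.intervalIntegrable_of_Icc hX.le)
    ((hucont.abs.pow 2).intervalIntegrable_of_Icc hX.le)
  rw [sub_zero] at hCS
  calc _ ≤ (K * X) ^ 2 * (L * (X - 0)) :=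
        integral_mul_le_of_le_of_le hX.le
          ((hucont.sub (by fun_prop)).abs.pow 2) hpint (sq_nonneg _) hR hpnonneg hpL
    _ ≤ (h ^ 2 * M * (∫ t in (0:ℝ)..X, |u t|) * X) ^ 2 * (L * X) := by
        rw [sub_zero]; gcongr
    _ = h ^ 4 * M ^ 2 * X ^ 3 * L * (∫ t in (0:ℝ)..X, |u t|) ^ 2 := by ring
    _ ≤ h ^ 4 * M ^ 2 * X ^ 3 * L * (X * ∫ x in (0:ℝ)..X, |u x| ^ 2) := by gcongr
    _ = h ^ 4 * M ^ 2 * X ^ 4 * L * ∫ x in (0:ℝ)..X, |u x| ^ 2 := by ring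

/-- Weighted integral estimate for the Duhamel remainder of the radial Mathieu
equation: if `|a − cosh²(x)| ≤ M` on `[0,X]` and `0 ≤ p ≤ L` is an integrable
weight, then `∫₀^X |R|² p ≤ h⁴ M² X⁴ L ∫₀^X |u|²`,
where `R(x) = u(x) − (u(0) + u'(0)x)`. -/
theorem duhamel_remainder_weighted
    (X : ℝ) (hX : 0 < X) (h a : ℝ)
    (u u' u'' : ℝ → ℝ)
    (hu' : ∀ x ∈ Set.Icc (0:ℝ) X, HasDerivWithinAt u (u' x) (Set.Icc 0 X) x)
    (hu'' : ∀ x ∈ Set.Icc (0:ℝ) X, HasDerivWithinAt u' (u'' x) (Set.Icc 0 X) x)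
    (hu''cont : ContinuousOn u'' (Set.Icc 0 X))
    (hode : ∀ x ∈ Set.Icc (0:ℝ) X,
      u'' x = h ^ 2 * (a - Real.cosh x ^ 2) * u x)
    (M : ℝ) (hM : 0 ≤ M)
    (hMbound : ∀ x ∈ Set.Icc (0:ℝ) X, |a - Real.cosh x ^ 2| ≤ M)
    (p : ℝ → ℝ) (L : ℝ)
    (hpnonneg : ∀ x ∈ Set.Icc (0:ℝ) X, 0 ≤ p x)
    (hpL : ∀ x ∈ Set.Icc (0:ℝ) X, p x ≤ L)
    (hpint : IntervalIntegrable p MeasureTheory.volume 0 X) :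
    (∫ x in (0:ℝ)..X, |u x - (u 0 + u' 0 * x)| ^ 2 * p x)
      ≤ h ^ 4 * M ^ 2 * X ^ 4 * L * ∫ x in (0:ℝ)..X, |u x| ^ 2 :=
  duhamel_remainder_weighted_general X hX h a u u' u'' hu' hu'' hu''cont hode M hMbound p L hpnonneg
    hpL hpint
end

section
/- Let ρ > 0 and 0 < r* ≤ ρ. Then for all r, t ∈ [0, r*] with (r, t) ≠ (0, 0) and all θ ∈ ℝ, one has (r² + t² · sin²θ) / √(r² + t²) ≤ (2·r*/ρ) · ((r + ρ)² + t² · sin²θ) / √((r + ρ)² + t²). -/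
/-- Comparison of the elliptical-coordinate Jacobian weight at radius `r` and at the
shifted radius `r + ρ`, uniform in `r, t ≤ r* ≤ ρ` and in `θ`. -/
theorem jacobian_weight_comparison
    (ρ rstar : ℝ) (hρ : 0 < ρ) (hrstar : 0 < rstar) (hle : rstar ≤ ρ) :
    ∀ r t : ℝ, r ∈ Set.Icc (0:ℝ) rstar → t ∈ Set.Icc (0:ℝ) rstar →
      (r, t) ≠ (0, 0) → ∀ θ : ℝ,
        (r ^ 2 + t ^ 2 * Real.sin θ ^ 2) / Real.sqrt (r ^ 2 + t ^ 2)
          ≤ (2 * rstar / ρ) *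
            (((r + ρ) ^ 2 + t ^ 2 * Real.sin θ ^ 2) / Real.sqrt ((r + ρ) ^ 2 + t ^ 2)) := by
  intro r t hr ht hne θ
  obtain ⟨hr0, hr1⟩ := hr
  obtain ⟨ht0, ht1⟩ := ht
  set s := Real.sin θ with hs
  have hs2 : s ^ 2 ≤ 1 := Real.sin_sq_le_one θ
  have hs0 : 0 ≤ s ^ 2 := sq_nonneg s
  have hrp : 0 < r + ρ := by linarith
  have hsqrt2 : Real.sqrt 2 * Real.sqrt 2 = 2 := Real.mul_self_sqrt (by norm_num)
  have hsqrt2pos : 0 < Real.sqrt 2 := Real.sqrt_pos.mpr (by norm_num)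
  -- Step 1: LHS ≤ √2 * rstar
  have key1 : (r ^ 2 + t ^ 2 * s ^ 2) / Real.sqrt (r ^ 2 + t ^ 2)
      ≤ Real.sqrt 2 * rstar := by
    rcases eq_or_lt_of_le (by positivity : (0:ℝ) ≤ r ^ 2 + t ^ 2) with h0 | hpos
    · have hr' : r = 0 := by nlinarith [sq_nonneg r, sq_nonneg t]
      have ht' : t = 0 := by nlinarith [sq_nonneg r, sq_nonneg t]
      rw [hr', ht']
      simp
      positivity
    · have hsp : 0 < Real.sqrt (r ^ 2 + t ^ 2) := Real.sqrt_pos.mpr hpos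
      have h1 : (r ^ 2 + t ^ 2 * s ^ 2) / Real.sqrt (r ^ 2 + t ^ 2)
          ≤ Real.sqrt (r ^ 2 + t ^ 2) := by
        rw [div_le_iff₀ hsp]
        have := Real.mul_self_sqrt (le_of_lt hpos)
        nlinarith [sq_nonneg t]
      have h2 : Real.sqrt (r ^ 2 + t ^ 2) ≤ Real.sqrt 2 * rstar := by
        have : Real.sqrt (r ^ 2 + t ^ 2) ≤ Real.sqrt (2 * rstar ^ 2) := by
          apply Real.sqrt_le_sqrt
          nlinarith
        calc Real.sqrt (r ^ 2 + t ^ 2) ≤ Real.sqrt (2 * rstar ^ 2) := this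
          _ = Real.sqrt 2 * rstar := by
              rw [Real.sqrt_mul (by norm_num), Real.sqrt_sq hrstar.le]
      linarith
  -- Step 2: √2 * rstar ≤ RHS
  have key2 : Real.sqrt 2 * rstar
      ≤ (2 * rstar / ρ) * (((r + ρ) ^ 2 + t ^ 2 * s ^ 2) / Real.sqrt ((r + ρ) ^ 2 + t ^ 2)) := by
    have hpos : (0:ℝ) < (r + ρ) ^ 2 + t ^ 2 := by positivity
    have hsp : 0 < Real.sqrt ((r + ρ) ^ 2 + t ^ 2) := Real.sqrt_pos.mpr hpos
    have hD : Real.sqrt ((r + ρ) ^ 2 + t ^ 2) ≤ Real.sqrt 2 * (r + ρ) := by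
      have : Real.sqrt ((r + ρ) ^ 2 + t ^ 2) ≤ Real.sqrt (2 * (r + ρ) ^ 2) := by
        apply Real.sqrt_le_sqrt
        nlinarith
      calc Real.sqrt ((r + ρ) ^ 2 + t ^ 2) ≤ Real.sqrt (2 * (r + ρ) ^ 2) := this
        _ = Real.sqrt 2 * (r + ρ) := by
            rw [Real.sqrt_mul (by norm_num), Real.sqrt_sq hrp.le]
    have hQ : (r + ρ) / Real.sqrt 2
        ≤ ((r + ρ) ^ 2 + t ^ 2 * s ^ 2) / Real.sqrt ((r + ρ) ^ 2 + t ^ 2) := by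
      rw [div_le_div_iff₀ hsqrt2pos hsp]
      have hnum : (r + ρ) * Real.sqrt ((r + ρ) ^ 2 + t ^ 2) ≤ (r + ρ) ^ 2 * Real.sqrt 2 := by
        calc (r + ρ) * Real.sqrt ((r + ρ) ^ 2 + t ^ 2)
            ≤ (r + ρ) * (Real.sqrt 2 * (r + ρ)) := by
              exact mul_le_mul_of_nonneg_left hD hrp.le
          _ = (r + ρ) ^ 2 * Real.sqrt 2 := by ring
      nlinarith [mul_nonneg (mul_nonneg (sq_nonneg t) hs0) hsqrt2pos.le]
    have hmul : 0 < 2 * rstar / ρ := by positivity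
    calc Real.sqrt 2 * rstar = (2 * rstar / ρ) * (ρ / Real.sqrt 2) := by
          field_simp
          nlinarith
      _ ≤ (2 * rstar / ρ) * ((r + ρ) / Real.sqrt 2) := by
          apply mul_le_mul_of_nonneg_left _ hmul.le
          apply div_le_div_of_nonneg_right (by linarith) hsqrt2pos.le
      _ ≤ (2 * rstar / ρ) * (((r + ρ) ^ 2 + t ^ 2 * s ^ 2) / Real.sqrt ((r + ρ) ^ 2 + t ^ 2)) := by
          exact mul_le_mul_of_nonneg_left hQ hmul.le
  linarith
end
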